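/- Path doubling: let G be a weighted undirected graph with minimum edge weight at least 1, let β ≥ 1 and ε₁ > 0, and suppose H is a set of weighted edges on V(G) such that (i) each edge of H has weight at least the G-distance between its endpoints, and (ii) for every pair u, v with d_G(u, v) ≤ 2^j, d_{G ∪ H}^{(β)}(u, v) ≤ (1+ε₁)·d_G(u, v). Then for every pair x, y with d_G(x, y) ≤ 2^{j+1}, we have d_{G ∪ H}^{(2β+1)}(x, y) ≤ (1+ε₁)·d_G(x, y). -/

import Mathlib

open scoped ENNReal NNReal BigOperators Classical

noncomputable def hdist {V : Type*} [Fintype V] [DecidableEq V]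
    (w : V → V → ℝ≥0∞) : ℕ → V → V → ℝ≥0∞
  | 0, u, v => if u = v then 0 else ⊤
  | h + 1, u, v => min (hdist w h u v) (⨅ x, w u x + hdist w h x v)

noncomputable def gdist {V : Type*} [Fintype V] [DecidableEq V]
    (w : V → V → ℝ≥0∞) (u v : V) : ℝ≥0∞ :=
  ⨅ h : ℕ, hdist w h u v

/-!
Since every edge weight is at least `1`, a shortest `x`–`y` walk exists and has finitely many
hops. Walk along it and stop at the first edge `ab` whose far end `b` is farther than `2^j`
from `x`; then `d_G(x, a) ≤ 2^j`, and the remaining suffix from `b` to `y` weighs less than `2^j`,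
as the whole walk weighs at most `2^(j+1)`. Joining the `β`-hop approximations of `x`–`a` and
`b`–`y` by the edge `ab` gives a `(2β+1)`-hop path of weight at most `(1+ε₁) d_G(x, y)`.
-/

section HopDistance

variable {V : Type*} [Fintype V] [DecidableEq V] (w : V → V → ℝ≥0∞)

lemma hdist_self (h : ℕ) (u : V) : hdist w h u u = 0 := by
  induction h with
  | zero => simp [hdist]
  | succ h ih => exact le_antisymm ((min_le_left _ _).trans ih.le) zero_le

lemma hdist_succ_le (h : ℕ) (u v : V) : hdist w (h + 1) u v ≤ hdist w h u v :=
  min_le_left _ _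

lemma hdist_succ_le_add (h : ℕ) (u z v : V) :
    hdist w (h + 1) u v ≤ w u z + hdist w h z v :=
  (min_le_right _ _).trans (iInf_le _ z)

lemma hdist_antitone (u v : V) : Antitone fun h => hdist w h u v :=
  antitone_nat_of_succ_le fun h => hdist_succ_le w h u v

lemma hdist_succ_eq (h : ℕ) (u v : V) :
    hdist w (h + 1) u v = hdist w h u v ∨
      ∃ z, hdist w (h + 1) u v = w u z + hdist w h z v := by
  have : Nonempty V := ⟨u⟩
  obtain ⟨z, hz⟩ := exists_eq_ciInf_of_finite (f := fun z => w u z + hdist w h z v)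
  rw [hdist.eq_2, ← hz]
  rcases min_choice (hdist w h u v) (w u z + hdist w h z v) with hmin | hmin <;> rw [hmin]
  · exact .inl rfl
  · exact .inr ⟨z, rfl⟩

lemma hdist_add_le (h₁ h₂ : ℕ) (u m v : V) :
    hdist w (h₁ + h₂) u v ≤ hdist w h₁ u m + hdist w h₂ m v := by
  induction h₁ generalizing u with
  | zero =>
    by_cases hum : u = m
    · subst hum; simp [hdist_self]
    · simp [hdist, hum]
  | succ h₁ ih =>
    rw [Nat.add_right_comm]
    rcases hdist_succ_eq w h₁ u m with heq | ⟨z, heq⟩ <;> rw [heq]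
    · exact (hdist_succ_le w _ u v).trans (ih u)
    · rw [add_assoc (w u z)]
      exact (hdist_succ_le_add w _ u z v).trans (add_le_add_right (ih z) _)

lemma hdist_two_mul_add_one_le (h : ℕ) (x a b y : V) :
    hdist w (2 * h + 1) x y ≤ hdist w h x a + w a b + hdist w h b y :=
  calc hdist w (2 * h + 1) x y = hdist w (h + (h + 1)) x y := by rw [two_mul, add_assoc]
    _ ≤ hdist w h x a + hdist w (h + 1) a y := hdist_add_le w h (h + 1) x a y
    _ ≤ hdist w h x a + (w a b + hdist w h b y) :=
      add_le_add_right (hdist_succ_le_add w h a b y) _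
    _ = hdist w h x a + w a b + hdist w h b y := (add_assoc _ _ _).symm

lemma gdist_le_hdist (h : ℕ) (u v : V) : gdist w u v ≤ hdist w h u v :=
  iInf_le _ h

lemma gdist_self (u : V) : gdist w u u = 0 :=
  le_antisymm ((gdist_le_hdist w 0 u u).trans (hdist_self w 0 u).le) zero_le

lemma gdist_le_weight (u v : V) : gdist w u v ≤ w u v :=
  (gdist_le_hdist w 1 u v).trans <| (hdist_succ_le_add w 0 u v v).trans (by simp [hdist])

lemma gdist_triangle (u m v : V) : gdist w u v ≤ gdist w u m + gdist w m v := by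
  simp only [gdist, ENNReal.iInf_add, ENNReal.add_iInf]
  exact le_iInf₂ fun h₂ h₁ => (gdist_le_hdist w _ u v).trans (hdist_add_le w h₁ h₂ u m v)

variable {w}

lemma min_le_hdist_succ (hw : ∀ u v, 1 ≤ w u v) (h : ℕ) (u v : V) :
    min ((h : ℝ≥0∞) + 1) (hdist w h u v) ≤ hdist w (h + 1) u v := by
  induction h generalizing u with
  | zero =>
    rcases hdist_succ_eq w 0 u v with heq | ⟨z, heq⟩ <;> rw [heq]
    · exact min_le_right _ _
    · exact (min_le_left _ _).trans (by simpa using le_add_right (hw u z))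
  | succ h ih =>
    rcases hdist_succ_eq w (h + 1) u v with heq | ⟨z, heq⟩ <;> rw [heq]
    · exact min_le_right _ _
    rcases le_or_gt ((h : ℝ≥0∞) + 1) (hdist w (h + 1) z v) with hlong | hshort
    · refine (min_le_left _ _).trans ?_
      rw [Nat.cast_succ, add_comm]
      exact add_le_add (hw u z) hlong
    · have hzv : hdist w h z v ≤ hdist w (h + 1) z v :=
        (min_le_iff.mp (ih z)).resolve_left hshort.not_ge
      calc _ ≤ hdist w (h + 1) u v := min_le_right _ _
        _ ≤ w u z + hdist w h z v := hdist_succ_le_add w h u z v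
        _ ≤ w u z + hdist w (h + 1) z v := add_le_add_right hzv _

lemma min_le_hdist_of_le (hw : ∀ u v, 1 ≤ w u v) {n m : ℕ} (hnm : n ≤ m) (u v : V) :
    min (n : ℝ≥0∞) (hdist w n u v) ≤ hdist w m u v := by
  induction m, hnm using Nat.le_induction with
  | base => exact min_le_right _ _
  | succ m hnm ih =>
    refine (le_min ?_ ih).trans (min_le_hdist_succ hw m u v)
    exact (min_le_left _ _).trans (by exact_mod_cast hnm.trans m.le_succ)

lemma exists_hdist_eq_gdist (hw : ∀ u v, 1 ≤ w u v) {u v : V} (huv : gdist w u v ≠ ⊤) :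
    ∃ n, hdist w n u v = gdist w u v := by
  obtain ⟨n, hn⟩ := ENNReal.exists_nat_gt huv
  have hmin : min (n : ℝ≥0∞) (hdist w n u v) ≤ gdist w u v := le_iInf fun m => by
    rcases le_total n m with hnm | hmn
    · exact min_le_hdist_of_le hw hnm u v
    · exact (min_le_right _ _).trans (hdist_antitone w u v hmn)
  exact ⟨n, le_antisymm ((min_le_iff.mp hmin).resolve_left hn.not_ge) (gdist_le_hdist w n u v)⟩

/-- Induction invariant: the walk from `x` has reached `c`, still within distance `T` of `x`,
and continues to `y` in `h` hops. -/
lemma exists_edge_split_of_hdist {x y : V} {T : ℝ≥0∞} (hT : T ≠ ⊤) (h : ℕ) :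
    ∀ c, c ≠ y → gdist w x c ≤ T → gdist w x c + hdist w h c y ≤ T + T →
      ∃ a b, gdist w x a ≤ T ∧ gdist w b y ≤ T ∧
        gdist w x a + w a b + gdist w b y ≤ gdist w x c + hdist w h c y := by
  induction h with
  | zero =>
    intro c hcy _ htot
    simp only [hdist, hcy, if_false, add_top, top_le_iff] at htot
    exact absurd htot (ENNReal.add_ne_top.mpr ⟨hT, hT⟩)
  | succ h ih =>
    intro c hcy hxc htot
    rcases hdist_succ_eq w h c y with heq | ⟨z, heq⟩ <;> rw [heq] at htot ⊢
    · exact ih c hcy hxc htot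
    have hxz : gdist w x z ≤ gdist w x c + w c z :=
      (gdist_triangle w x c z).trans (add_le_add_right (gdist_le_weight w c z) _)
    rw [← add_assoc] at htot ⊢
    by_cases hstep : z ≠ y ∧ gdist w x z ≤ T
    · obtain ⟨a, b, ha, hb, hab⟩ :=
        ih z hstep.1 hstep.2 ((add_le_add_left hxz _).trans htot)
      exact ⟨a, b, ha, hb, hab.trans (add_le_add_left hxz _)⟩
    refine ⟨c, z, hxc, ?_, add_le_add_right (gdist_le_hdist w h z y) _⟩
    rw [not_and_or, not_not, not_le] at hstep
    rcases hstep with rfl | hfar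
    · exact (gdist_self w z).trans_le zero_le
    -- past `z` the walk is already farther than `T` from `x`, so its rest is shorter than `T`
    refine (gdist_le_hdist w h z y).trans (not_lt.mp fun hrest => ?_)
    exact (ENNReal.add_lt_add (hfar.trans_le hxz) hrest).not_ge htot

lemma exists_edge_split (hw : ∀ u v, 1 ≤ w u v) {x y : V} (hxy : x ≠ y) {T : ℝ≥0∞}
    (hT : T ≠ ⊤) (hd : gdist w x y ≤ T + T) :
    ∃ a b, gdist w x a ≤ T ∧ gdist w b y ≤ T ∧
      gdist w x a + w a b + gdist w b y ≤ gdist w x y := by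
  obtain ⟨n, hn⟩ :=
    exists_hdist_eq_gdist hw (ne_top_of_le_ne_top (ENNReal.add_ne_top.mpr ⟨hT, hT⟩) hd)
  have hstart := exists_edge_split_of_hdist (w := w) (x := x) hT n x hxy
  rw [gdist_self, zero_add, hn] at hstart
  exact hstart zero_le hd

end HopDistance

theorem stmt_9_general {V : Type*} [Fintype V] [DecidableEq V]
    (w H : V → V → ℝ≥0∞)
    (hmin : ∀ u v, 1 ≤ w u v)
    (β : ℕ) (ε₁ : ℝ≥0) (j : ℕ)
    (hhop : ∀ u v, gdist w u v ≤ 2 ^ j →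
      hdist (fun a b => min (w a b) (H a b)) β u v ≤ (1 + (ε₁ : ℝ≥0∞)) * gdist w u v)
    (x y : V) (hxy : gdist w x y ≤ 2 ^ (j + 1)) :
    hdist (fun a b => min (w a b) (H a b)) (2 * β + 1) x y ≤
      (1 + (ε₁ : ℝ≥0∞)) * gdist w x y := by
  by_cases hxy' : x = y
  · subst hxy'
    rw [hdist_self]
    exact zero_le
  obtain ⟨a, b, ha, hb, hab⟩ := exists_edge_split hmin hxy'
    (ENNReal.pow_ne_top ENNReal.ofNat_ne_top) (by rwa [← two_mul, ← pow_succ'])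
  have hedge : min (w a b) (H a b) ≤ (1 + (ε₁ : ℝ≥0∞)) * w a b :=
    (min_le_left _ _).trans (le_mul_of_one_le_left zero_le le_self_add)
  calc _ ≤ _ := hdist_two_mul_add_one_le _ β x a b y
    _ ≤ (1 + (ε₁ : ℝ≥0∞)) * gdist w x a + (1 + (ε₁ : ℝ≥0∞)) * w a b +
        (1 + (ε₁ : ℝ≥0∞)) * gdist w b y :=
      add_le_add (add_le_add (hhop x a ha) hedge) (hhop b y hb)
    _ = (1 + (ε₁ : ℝ≥0∞)) * (gdist w x a + w a b + gdist w b y) := by ring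
    _ ≤ (1 + (ε₁ : ℝ≥0∞)) * gdist w x y := mul_le_mul_right hab _

/-- Path doubling: if `H` (whose edge weights dominate `G`-distances) provides
`(1+ε₁)`-approximate `β`-hop paths for all pairs at distance at most `2^j`, then it
provides `(1+ε₁)`-approximate `(2β+1)`-hop paths for all pairs at distance at most `2^{j+1}`. -/
theorem stmt_9 {V : Type*} [Fintype V] [DecidableEq V]
    (w H : V → V → ℝ≥0∞)
    (hsym : ∀ u v, w u v = w v u) (hHsym : ∀ u v, H u v = H v u)
    (hmin : ∀ u v, 1 ≤ w u v)
    (β : ℕ) (hβ : 1 ≤ β) (ε₁ : ℝ≥0) (hε : 0 < ε₁) (j : ℕ)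
    (hdom : ∀ u v, gdist w u v ≤ H u v)
    (hhop : ∀ u v, gdist w u v ≤ 2 ^ j →
      hdist (fun a b => min (w a b) (H a b)) β u v ≤ (1 + (ε₁ : ℝ≥0∞)) * gdist w u v)
    (x y : V) (hxy : gdist w x y ≤ 2 ^ (j + 1)) :
    hdist (fun a b => min (w a b) (H a b)) (2 * β + 1) x y ≤
      (1 + (ε₁ : ℝ≥0∞)) * gdist w x y :=
  stmt_9_general w H hmin β ε₁ j hhop x y hxy
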